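/- arXiv:1705.07437 — 2 statements merged into one kernel-verified Lean document; each statement's English description precedes it below -/
import Mathlib

section
/- Let Q ⊆ 𝔽₂^m and R ⊆ 𝔽₂ⁿ. The direct sum Q ⊕ R ⊆ 𝔽₂^{m+n} is powerful if and only if both Q and R are powerful. -/
/-- A finite set `S` of vectors in `𝔽₂ⁿ` is *powerful* if for every subset `X` of the
coordinate positions, the number of vectors in `S` that are zero at every position in `X`
is a power of 2. -/
def IsPowerful {n : ℕ} (S : Finset (Fin n → ZMod 2)) : Prop :=
  ∀ X : Finset (Fin n), ∃ d : ℕ, (S.filter (fun v => ∀ i ∈ X, v i = 0)).card = 2 ^ d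

/-- The direct sum `Q ⊕ R ⊆ 𝔽₂^{m+n}`: all concatenations `uv` with `u ∈ Q` and `v ∈ R`. -/
def directSum {m n : ℕ} (Q : Finset (Fin m → ZMod 2)) (R : Finset (Fin n → ZMod 2)) :
    Finset (Fin (m + n) → ZMod 2) :=
  (Q ×ˢ R).image (fun p => Fin.append p.1 p.2)

/-!
Concatenation `(u, v) ↦ uv` is a bijection `Q × R → Q ⊕ R`, and `uv` vanishes on a set `X` of
positions exactly when `u` vanishes on the positions of `X` among the first `m` and `v` on those
among the last `n`. Hence every count for `Q ⊕ R` is the product of a count for `Q` and a count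
for `R`. A product of powers of 2 is a power of 2, and conversely each factor of a power of 2 is
one; choosing `X` inside a single block recovers every count for `Q` (resp. `R`) as such a factor.
-/

open Finset

def vanishingOn {ι α : Type*} [Zero α] [DecidableEq α] (S : Finset (ι → α)) (X : Finset ι) :
    Finset (ι → α) :=
  S.filter fun v => ∀ i ∈ X, v i = 0

theorem isPowerful_iff {n : ℕ} (S : Finset (Fin n → ZMod 2)) :
    IsPowerful S ↔ ∀ X, ∃ d, #(vanishingOn S X) = 2 ^ d := by
  unfold IsPowerful vanishingOn
  -- not `Iff.rfl`: `IsPowerful` decides `∀ i ∈ X` via `Nat.decidableForallFin`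
  congr!

theorem Finset.preimage_image_of_injective {α β : Type*} [DecidableEq β] {f : α → β}
    (hf : Function.Injective f) (s : Finset α) : (s.image f).preimage f hf.injOn = s := by
  ext
  simp [hf.eq_iff]

theorem Nat.exists_eq_pow_of_mul_eq_pow {p a b d : ℕ} (hp : p.Prime) (h : a * b = p ^ d) :
    ∃ k, a = p ^ k :=
  let ⟨k, _, hk⟩ := (Nat.dvd_prime_pow hp).mp (Dvd.intro b h)
  ⟨k, hk⟩

theorem Fin.forall_mem_append_iff {α : Type*} {m n : ℕ} (p : α → Prop) (u : Fin m → α)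
    (v : Fin n → α) (X : Finset (Fin (m + n))) :
    (∀ i ∈ X, p (Fin.append u v i)) ↔
      (∀ i ∈ X.preimage (Fin.castAdd n) (Fin.castAdd_injective m n).injOn, p (u i)) ∧
        ∀ j ∈ X.preimage (Fin.natAdd m) (Fin.natAdd_injective n m).injOn, p (v j) := by
  simpa using Fin.forall_fin_add fun i => i ∈ X → p (Fin.append u v i)

theorem vanishingOn_image_append {α : Type*} [Zero α] [DecidableEq α] {m n : ℕ}
    (Q : Finset (Fin m → α)) (R : Finset (Fin n → α)) (X : Finset (Fin (m + n))) :
    vanishingOn ((Q ×ˢ R).image fun w => Fin.append w.1 w.2) X =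
      (vanishingOn Q (X.preimage (Fin.castAdd n) (Fin.castAdd_injective m n).injOn) ×ˢ
        vanishingOn R (X.preimage (Fin.natAdd m) (Fin.natAdd_injective n m).injOn)).image
        fun w => Fin.append w.1 w.2 := by
  ext f
  simp only [vanishingOn, mem_filter, mem_image, mem_product, Prod.exists]
  constructor
  · rintro ⟨⟨u, v, ⟨hu, hv⟩, rfl⟩, h⟩
    obtain ⟨hX₁, hX₂⟩ := (Fin.forall_mem_append_iff (· = 0) u v X).1 h
    exact ⟨u, v, ⟨⟨hu, hX₁⟩, hv, hX₂⟩, rfl⟩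
  · rintro ⟨u, v, ⟨⟨hu, hX₁⟩, hv, hX₂⟩, rfl⟩
    exact ⟨⟨u, v, ⟨hu, hv⟩, rfl⟩, (Fin.forall_mem_append_iff (· = 0) u v X).2 ⟨hX₁, hX₂⟩⟩

theorem card_vanishingOn_directSum {m n : ℕ} (Q : Finset (Fin m → ZMod 2))
    (R : Finset (Fin n → ZMod 2)) (X : Finset (Fin (m + n))) :
    #(vanishingOn (directSum Q R) X) =
      #(vanishingOn Q (X.preimage (Fin.castAdd n) (Fin.castAdd_injective m n).injOn)) *
        #(vanishingOn R (X.preimage (Fin.natAdd m) (Fin.natAdd_injective n m).injOn)) := by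
  rw [directSum, vanishingOn_image_append, card_image_of_injective, card_product]
  exact (Fin.appendEquiv m n).injective

/-- `Q ⊕ R` is powerful if and only if both `Q` and `R` are powerful. -/
theorem directSum_powerful_iff {m n : ℕ} (Q : Finset (Fin m → ZMod 2))
    (R : Finset (Fin n → ZMod 2)) :
    IsPowerful (directSum Q R) ↔ IsPowerful Q ∧ IsPowerful R := by
  simp only [isPowerful_iff]
  constructor
  · intro h
    refine ⟨fun X => ?_, fun X => ?_⟩
    · obtain ⟨d, hd⟩ := h (X.image (Fin.castAdd n))
      rw [card_vanishingOn_directSum, preimage_image_of_injective (Fin.castAdd_injective m n)] at hd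
      exact Nat.exists_eq_pow_of_mul_eq_pow Nat.prime_two hd
    · obtain ⟨d, hd⟩ := h (X.image (Fin.natAdd m))
      rw [card_vanishingOn_directSum, preimage_image_of_injective (Fin.natAdd_injective n m),
        mul_comm] at hd
      exact Nat.exists_eq_pow_of_mul_eq_pow Nat.prime_two hd
  · rintro ⟨hQ, hR⟩ X
    obtain ⟨a, ha⟩ := hQ (X.preimage (Fin.castAdd n) (Fin.castAdd_injective m n).injOn)
    obtain ⟨b, hb⟩ := hR (X.preimage (Fin.natAdd m) (Fin.natAdd_injective n m).injOn)
    exact ⟨a + b, by rw [card_vanishingOn_directSum, ha, hb, pow_add]⟩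
end

section
/- If S₁, S₂ ⊆ 𝔽₂ⁿ are powerful sets, then S₁ ◇ S₂ := (S₁+∘) • (S₂+□) ⊆ 𝔽₂^{n+3} is a powerful set. -/
/-- The loop extension `T+∘ ⊆ 𝔽₂^{n+1}`: append a new last coordinate `0` to every vector
of `T`. -/
def loopExt {n : ℕ} (T : Finset (Fin n → ZMod 2)) : Finset (Fin (n + 1) → ZMod 2) :=
  T.image (fun v => Fin.snoc v 0)

/-- The framing `T+□ ⊆ 𝔽₂^{n+1}`: the zero vector of length `n+1` together with every
nonzero vector of `T` extended by a new last coordinate equal to `1`. -/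
def framing {n : ℕ} (T : Finset (Fin n → ZMod 2)) : Finset (Fin (n + 1) → ZMod 2) :=
  insert 0 ((T.filter (fun v => v ≠ 0)).image (fun v => Fin.snoc v 1))

/-- The combination `Q•R ⊆ 𝔽₂^{n+2}`:
`{v00 : v ∈ Q ∩ R} ∪ {v01 : v ∈ Q ∖ R} ∪ {v10 : v ∈ R ∖ Q} ∪ {v11 : v ∉ Q ∪ R}`. -/
def bulletComb {n : ℕ} (Q R : Finset (Fin n → ZMod 2)) : Finset (Fin (n + 2) → ZMod 2) :=
  ((Q ∩ R).image (fun v => Fin.append v ![0, 0])) ∪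
  ((Q \ R).image (fun v => Fin.append v ![0, 1])) ∪
  ((R \ Q).image (fun v => Fin.append v ![1, 0])) ∪
  (((Q ∪ R)ᶜ).image (fun v => Fin.append v ![1, 1]))

/-!
The two appended bits of a vector of `Q • R` are determined by its first part `v`: the first
is `0` iff `v ∈ Q`, the second iff `v ∈ R`. So for a set `X` of positions, the vectors of
`Q • R` vanishing on `X` correspond to the `v` vanishing on the old positions of `X` and lying
in `Q`, `R`, `Q ∩ R` or anywhere, according to which of the two new positions lie in `X`.
Hence `Q • R` is powerful whenever `Q`, `R` and `Q ∩ R` are. Both `S₁+∘` and `S₂+□` stay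
powerful (framing a set containing `0` trades its nonzero vectors one for one), and they meet
exactly in `{0}`.
-/

section Coordinates

variable {α : Type*} [Zero α] {m : ℕ}

theorem snoc_eq_zero_on_iff (X : Finset (Fin (m + 1))) (v : Fin m → α) (c : α) :
    (∀ i ∈ X, (Fin.snoc v c : Fin (m + 1) → α) i = 0) ↔
      (∀ j ∈ Finset.univ.filter (fun j => j.castSucc ∈ X), v j = 0) ∧
        (Fin.last m ∈ X → c = 0) := by
  rw [Fin.forall_iff_castSucc]
  simp only [Fin.snoc_castSucc, Fin.snoc_last, Finset.mem_filter, Finset.mem_univ, true_and]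
  exact and_comm

theorem append_pair_eq_zero_on_iff (X : Finset (Fin (m + 2))) (v : Fin m → α) (a b : α) :
    (∀ i ∈ X, Fin.append v ![a, b] i = 0) ↔
      (∀ j ∈ Finset.univ.filter (fun j => Fin.castAdd 2 j ∈ X), v j = 0) ∧
        (Fin.natAdd m 0 ∈ X → a = 0) ∧ (Fin.natAdd m 1 ∈ X → b = 0) := by
  rw [Fin.forall_fin_add, Fin.forall_fin_two]
  simp only [Fin.append_left, Fin.append_right, Finset.mem_filter, Finset.mem_univ, true_and,
    Matrix.cons_val_zero, Matrix.cons_val_one]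

theorem Fin.snoc_zero_zero :
    (Fin.snoc (0 : Fin m → α) 0 : Fin (m + 1) → α) = 0 :=
  funext fun i => Fin.lastCases (by simp) (fun j => by simp) i

theorem Fin.snoc_one_ne_zero [One α] [NeZero (1 : α)]
    (v : Fin m → α) : (Fin.snoc v 1 : Fin (m + 1) → α) ≠ 0 := fun h =>
  (one_ne_zero : (1 : α) ≠ 0) (by simpa using congrFun h (Fin.last m))

end Coordinates

theorem isPowerful_univ (n : ℕ) : IsPowerful (Finset.univ : Finset (Fin n → ZMod 2)) := by
  intro X
  refine ⟨Xᶜ.card, ?_⟩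
  have hpi : Finset.univ.filter (fun v : Fin n → ZMod 2 => ∀ i ∈ X, v i = 0) =
      Fintype.piFinset (fun i => if i ∈ X then {0} else Finset.univ) := by
    ext v
    simp only [Finset.mem_filter, Finset.mem_univ, true_and, Fintype.mem_piFinset]
    exact forall_congr' fun i => by split_ifs <;> simp [*]
  simp [hpi, apply_ite Finset.card, Finset.prod_ite, Finset.filter_not,
    Finset.compl_eq_univ_sdiff]

theorem isPowerful_singleton_zero (n : ℕ) : IsPowerful ({0} : Finset (Fin n → ZMod 2)) :=
  fun X => ⟨0, by simp [Finset.filter_singleton]⟩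

section Powerful

variable {n : ℕ}

theorem IsPowerful.zero_mem {S : Finset (Fin n → ZMod 2)} (h : IsPowerful S) : 0 ∈ S := by
  obtain ⟨d, hd⟩ := h Finset.univ
  obtain ⟨v, hv⟩ := Finset.card_pos.mp (hd ▸ Nat.two_pow_pos d)
  rw [Finset.mem_filter] at hv
  convert hv.1
  exact funext fun i => (hv.2 i (Finset.mem_univ i)).symm

theorem IsPowerful.loopExt {T : Finset (Fin n → ZMod 2)} (h : IsPowerful T) :
    IsPowerful (loopExt T) := by
  intro X
  obtain ⟨d, hd⟩ := h (Finset.univ.filter fun j => j.castSucc ∈ X)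
  refine ⟨d, ?_⟩
  rw [_root_.loopExt, Finset.filter_image,
    Finset.card_image_of_injective _ (Fin.snoc_injective2.left 0)]
  simpa [snoc_eq_zero_on_iff] using hd

theorem IsPowerful.framing {T : Finset (Fin n → ZMod 2)} (h : IsPowerful T) :
    IsPowerful (framing T) := by
  intro X
  obtain ⟨d, hd⟩ := h (Finset.univ.filter fun j => j.castSucc ∈ X)
  rw [_root_.framing, Finset.filter_insert, if_pos (fun _ _ => Pi.zero_apply _),
    Finset.filter_image,
    Finset.card_insert_of_notMem (by simpa using fun v _ _ _ => Fin.snoc_one_ne_zero v),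
    Finset.card_image_of_injective _ (Fin.snoc_injective2.left 1), Finset.filter_filter]
  by_cases hX : Fin.last n ∈ X
  · exact ⟨0, by simp [snoc_eq_zero_on_iff, hX]⟩
  · refine ⟨d, ?_⟩
    simp only [snoc_eq_zero_on_iff, hX, IsEmpty.forall_iff, and_true]
    have h0 : 0 ∈ T.filter fun v =>
        ∀ j ∈ Finset.univ.filter (fun j => j.castSucc ∈ X), v j = 0 :=
      Finset.mem_filter.2 ⟨h.zero_mem, fun _ _ => rfl⟩
    rw [← hd, ← Finset.card_erase_add_one h0]
    congr 2
    ext v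
    simp only [Finset.mem_filter, Finset.mem_erase]
    tauto

theorem loopExt_inter_framing {S : Finset (Fin n → ZMod 2)} (hS : 0 ∈ S)
    (T : Finset (Fin n → ZMod 2)) : loopExt S ∩ framing T = {0} := by
  ext w
  simp only [loopExt, framing, Finset.mem_inter, Finset.mem_image, Finset.mem_insert,
    Finset.mem_filter, Finset.mem_singleton]
  constructor
  · rintro ⟨⟨v, -, rfl⟩, h0 | ⟨u, -, hu⟩⟩
    · exact h0
    · simp at hu
  · rintro rfl
    exact ⟨⟨0, hS, Fin.snoc_zero_zero⟩, Or.inl rfl⟩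

theorem bulletComb_eq_image (Q R : Finset (Fin n → ZMod 2)) :
    bulletComb Q R = Finset.univ.image
      (fun v => Fin.append v ![if v ∈ Q then 0 else 1, if v ∈ R then 0 else 1]) := by
  ext w
  simp only [bulletComb, Finset.mem_union, Finset.mem_image, Finset.mem_inter,
    Finset.mem_sdiff, Finset.mem_compl, Finset.mem_univ, true_and, not_or]
  constructor
  · rintro (((⟨v, hv, rfl⟩ | ⟨v, hv, rfl⟩) | ⟨v, hv, rfl⟩) | ⟨v, hv, rfl⟩) <;>
      exact ⟨v, by simp [hv]⟩
  · rintro ⟨v, rfl⟩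
    by_cases hQ : v ∈ Q <;> by_cases hR : v ∈ R
    · exact Or.inl (Or.inl (Or.inl ⟨v, ⟨hQ, hR⟩, by simp [hQ, hR]⟩))
    · exact Or.inl (Or.inl (Or.inr ⟨v, ⟨hQ, hR⟩, by simp [hQ, hR]⟩))
    · exact Or.inl (Or.inr ⟨v, ⟨hR, hQ⟩, by simp [hQ, hR]⟩)
    · exact Or.inr ⟨v, ⟨hQ, hR⟩, by simp [hQ, hR]⟩

theorem card_filter_bulletComb (Q R : Finset (Fin n → ZMod 2)) (X : Finset (Fin (n + 2))) :
    ((bulletComb Q R).filter fun w => ∀ i ∈ X, w i = 0).card =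
      (((if Fin.natAdd n 0 ∈ X then Q else Finset.univ) ∩
          (if Fin.natAdd n 1 ∈ X then R else Finset.univ)).filter
        fun v => ∀ j ∈ Finset.univ.filter (fun j => Fin.castAdd 2 j ∈ X), v j = 0).card := by
  rw [bulletComb_eq_image, Finset.filter_image, Finset.card_image_of_injective]
  · congr 1
    ext v
    by_cases ha : Fin.natAdd n 0 ∈ X <;> by_cases hb : Fin.natAdd n 1 ∈ X <;>
      simp [append_pair_eq_zero_on_iff, ha, hb, and_comm]
  · intro v w hvw
    simpa using congrArg (fun u => fun i => u (Fin.castAdd 2 i)) hvw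

theorem IsPowerful.bulletComb {Q R : Finset (Fin n → ZMod 2)} (hQ : IsPowerful Q)
    (hR : IsPowerful R) (hQR : IsPowerful (Q ∩ R)) : IsPowerful (bulletComb Q R) := by
  intro X
  rw [card_filter_bulletComb]
  generalize Finset.univ.filter (fun j => Fin.castAdd 2 j ∈ X) = Y
  split_ifs
  · exact hQR Y
  · rw [Finset.inter_univ]; exact hQ Y
  · rw [Finset.univ_inter]; exact hR Y
  · rw [Finset.inter_self]; exact isPowerful_univ n Y

end Powerful

/-- If `S₁, S₂ ⊆ 𝔽₂ⁿ` are powerful, then `S₁ ◇ S₂ = (S₁+∘) • (S₂+□)` is powerful. -/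
theorem diamond_powerful {n : ℕ} (S₁ S₂ : Finset (Fin n → ZMod 2))
    (h₁ : IsPowerful S₁) (h₂ : IsPowerful S₂) :
    IsPowerful (bulletComb (loopExt S₁) (framing S₂)) :=
  h₁.loopExt.bulletComb h₂.framing
    (loopExt_inter_framing h₁.zero_mem S₂ ▸ isPowerful_singleton_zero (n + 1))
end
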